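/- arXiv:2408.04999 — 5 statements merged into one kernel-verified Lean document; each statement's English description precedes it below -/
import Mathlib

section
/- Let n ≥ 1, let A be an n×n matrix with entries in EReal none of which equals +∞, and let b and x be columns of length n with entries in EReal. If for every index k the inequality x_k ≤ ⨅_j (b_j + (−A_{jk})) holds (infimum over j in EReal, where −(−∞) = +∞), then for every index j the inequality ⨆_k (A_{jk} + x_k) ≤ b_j holds. In other words, every column x ≤ (b⁻A)⁻ is a particular solution to the max-plus inequality Ax ≤ b. -/
lemma ereal_aux (a b : EReal) (ha : a ≠ ⊤) : a + (b + -a) ≤ b := by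
  induction a with
  | bot => simp
  | coe r =>
      induction b with
      | bot => simp
      | coe s =>
          rw [← EReal.coe_neg, ← EReal.coe_add, ← EReal.coe_add]
          norm_num
      | top => simp
  | top => exact absurd rfl ha

/-- Every column `x ≤ (b⁻A)⁻` is a particular solution to the max-plus
inequality `Ax ≤ b`, where the max-plus semiring is modeled inside `EReal`,
the matrix-vector product is `(Ax)_j = ⨆ k, A j k + x k`, and the
pseudo-inverse is the entrywise negated transpose. -/
theorem maxPlus_solve_inequality (n : ℕ) (hn : 1 ≤ n)
    (A : Fin n → Fin n → EReal) (hA : ∀ j k, A j k ≠ ⊤)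
    (b x : Fin n → EReal)
    (hx : ∀ k, x k ≤ ⨅ j, b j + (-(A j k))) :
    ∀ j, (⨆ k, A j k + x k) ≤ b j := by
  intro j
  apply iSup_le
  intro k
  calc A j k + x k ≤ A j k + (b j + -(A j k)) := by
        gcongr
        exact (hx k).trans (iInf_le _ j)
    _ ≤ b j := ereal_aux _ _ (hA j k)
end

section
/- Let n ≥ 1, let A be an n×n matrix with entries in EReal none of which equals +∞, and let b be a column of length n with real (finite) entries. If there exists a column y with entries in EReal such that for every j, ⨆_k (A_{jk} + y_k) = b_j, then the column x defined by x_k = ⨅_j (b_j + (−A_{jk})) (infimum over j in EReal, where −(−∞) = +∞) also satisfies ⨆_k (A_{jk} + x_k) = b_j for every j. In other words, if the max-plus equation Ax = b has a solution, then x = (b⁻A)⁻ is a particular solution. -/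
/-- If the max-plus equation `Ay = b` (with `b` finite) has a solution, then
`x = (b⁻A)⁻`, i.e. `x k = ⨅ j, b j + (-(A j k))`, is a particular solution.
The max-plus semiring is modeled inside `EReal`, the matrix-vector product is
`(Ax)_j = ⨆ k, A j k + x k`, and the pseudo-inverse is the entrywise negated
transpose. -/
theorem maxPlus_solve_equation (n : ℕ) (hn : 1 ≤ n)
    (A : Fin n → Fin n → EReal) (hA : ∀ j k, A j k ≠ ⊤)
    (b : Fin n → ℝ)
    (hsol : ∃ y : Fin n → EReal, ∀ j, (⨆ k, A j k + y k) = (b j : EReal)) :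
    ∀ j, (⨆ k, A j k + (⨅ j', (b j' : EReal) + (-(A j' k)))) = (b j : EReal) := by
  obtain ⟨y, hy⟩ := hsol
  have hxk : ∀ k, y k ≤ ⨅ j', (b j' : EReal) + (-(A j' k)) := by
    intro k
    refine le_iInf fun j' => ?_
    have h1 : A j' k + y k ≤ (b j' : EReal) := (hy j') ▸ le_iSup (fun k => A j' k + y k) k
    rw [← sub_eq_add_neg]
    rw [EReal.le_sub_iff_add_le (Or.inr (EReal.coe_ne_bot _)) (Or.inl (hA j' k))]
    rw [add_comm]; exact h1
  intro j
  apply le_antisymm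
  · refine iSup_le fun k => ?_
    rcases eq_or_ne (A j k) ⊥ with h | h
    · simp [h]
    · calc A j k + (⨅ j', (b j' : EReal) + (-(A j' k)))
          ≤ A j k + ((b j : EReal) + (-(A j k))) := by
            exact add_le_add_right (iInf_le _ j) _
        _ = (b j : EReal) := by
            lift A j k to ℝ using ⟨hA j k, h⟩ with a
            rw [← EReal.coe_neg, ← EReal.coe_add, ← EReal.coe_add]
            norm_num
  · rw [← hy j]
    exact iSup_mono fun k => add_le_add_right (hxk k) _
end

section
/- Let E be an m×m matrix, F an m×p matrix, G a p×m matrix, and H a p×p matrix, all over the tropical semiring Tropical (WithTop ℝ). Suppose E× is an m×m matrix satisfying E× = 1 + E * E× and E× = 1 + E× * E, let D := H + G * E× * F, and suppose D× is a p×p matrix satisfying D× = 1 + D * D× and D× = 1 + D× * D. Let A be the (m+p)×(m+p) block matrix with blocks E, F, G, H, and let C be the block matrix with blocks E× * (1 + F * D× * G * E×) (top-left), E× * F * D× (top-right), D× * G * E× (bottom-left), and D× (bottom-right). Then C = 1 + A * C and C = 1 + C * A, i.e., C is the closure A× of A. -/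
set_option maxHeartbeats 1000000


open Matrix

/-- Block formula for the closure of a matrix over the tropical semiring:
if `E×` is a closure of `E` and `D×` is a closure of `D = H + G * E× * F`,
then the block matrix
`[[E× * (1 + F * D× * G * E×), E× * F * D×], [D× * G * E×, D×]]`
is a closure of the block matrix `[[E, F], [G, H]]`. -/
theorem block_closure (m p : ℕ)
    (E Ec : Matrix (Fin m) (Fin m) (Tropical (WithTop ℝ)))
    (F : Matrix (Fin m) (Fin p) (Tropical (WithTop ℝ)))
    (G : Matrix (Fin p) (Fin m) (Tropical (WithTop ℝ)))
    (H Dc : Matrix (Fin p) (Fin p) (Tropical (WithTop ℝ)))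
    (hE₁ : Ec = 1 + E * Ec) (hE₂ : Ec = 1 + Ec * E)
    (hD₁ : Dc = 1 + (H + G * Ec * F) * Dc)
    (hD₂ : Dc = 1 + Dc * (H + G * Ec * F)) :
    let A := Matrix.fromBlocks E F G H
    let C := Matrix.fromBlocks (Ec * (1 + F * Dc * G * Ec)) (Ec * F * Dc)
      (Dc * G * Ec) Dc
    C = 1 + A * C ∧ C = 1 + C * A := by
  intro A C
  constructor
  · show _ = 1 + A * C
    rw [show (1 : Matrix (Fin m ⊕ Fin p) (Fin m ⊕ Fin p) (Tropical (WithTop ℝ)))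
        = Matrix.fromBlocks 1 0 0 1 from Matrix.fromBlocks_one.symm]
    simp only [A, C, Matrix.fromBlocks_multiply, Matrix.fromBlocks_add]
    rw [Matrix.fromBlocks_inj]
    refine ⟨?_, ?_, ?_, ?_⟩
    · symm
      calc 1 + (E * (Ec * (1 + F * Dc * G * Ec)) + F * (Dc * G * Ec))
          = (1 + E * Ec) + (1 + E * Ec) * (F * (Dc * (G * Ec))) := by
            simp only [Matrix.mul_add, Matrix.add_mul, Matrix.mul_one, Matrix.one_mul, Matrix.mul_assoc, zero_add]
            abel
        _ = Ec + Ec * (F * (Dc * (G * Ec))) := by rw [← hE₁]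
        _ = Ec * (1 + F * Dc * G * Ec) := by
            simp only [Matrix.mul_add, Matrix.add_mul, Matrix.mul_one, Matrix.one_mul, Matrix.mul_assoc, zero_add]
    · calc Ec * F * Dc = (1 + E * Ec) * F * Dc := by rw [← hE₁]
        _ = 0 + (E * (Ec * F * Dc) + F * Dc) := by
            simp only [Matrix.mul_add, Matrix.add_mul, Matrix.mul_one, Matrix.one_mul, Matrix.mul_assoc, zero_add]; abel
    · calc Dc * G * Ec = (1 + (H + G * Ec * F) * Dc) * G * Ec := by rw [← hD₁]
        _ = 0 + (G * (Ec * (1 + F * Dc * G * Ec)) + H * (Dc * G * Ec)) := by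
            simp only [Matrix.mul_add, Matrix.add_mul, Matrix.mul_one, Matrix.one_mul, Matrix.mul_assoc, zero_add]; abel
    · calc Dc = 1 + (H + G * Ec * F) * Dc := hD₁
        _ = 1 + (G * (Ec * F * Dc) + H * Dc) := by
            simp only [Matrix.mul_add, Matrix.add_mul, Matrix.mul_one, Matrix.one_mul, Matrix.mul_assoc, zero_add]; abel
  · show _ = 1 + C * A
    rw [show (1 : Matrix (Fin m ⊕ Fin p) (Fin m ⊕ Fin p) (Tropical (WithTop ℝ)))
        = Matrix.fromBlocks 1 0 0 1 from Matrix.fromBlocks_one.symm]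
    simp only [A, C, Matrix.fromBlocks_multiply, Matrix.fromBlocks_add]
    rw [Matrix.fromBlocks_inj]
    refine ⟨?_, ?_, ?_, ?_⟩
    · calc Ec * (1 + F * Dc * G * Ec)
          = (1 + Ec * E) + Ec * (F * (Dc * (G * (1 + Ec * E)))) := by
            rw [← hE₂]; simp only [Matrix.mul_add, Matrix.add_mul, Matrix.mul_one, Matrix.one_mul, Matrix.mul_assoc, zero_add]
        _ = 1 + (Ec * (1 + F * Dc * G * Ec) * E + Ec * F * Dc * G) := by
            simp only [Matrix.mul_add, Matrix.add_mul, Matrix.mul_one, Matrix.one_mul, Matrix.mul_assoc, zero_add]; abel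
    · calc Ec * F * Dc = Ec * F * (1 + Dc * (H + G * Ec * F)) := by rw [← hD₂]
        _ = 0 + (Ec * (1 + F * Dc * G * Ec) * F + Ec * F * Dc * H) := by
            simp only [Matrix.mul_add, Matrix.add_mul, Matrix.mul_one, Matrix.one_mul, Matrix.mul_assoc, zero_add]; abel
    · calc Dc * G * Ec = Dc * G * (1 + Ec * E) := by rw [← hE₂]
        _ = 0 + (Dc * G * Ec * E + Dc * G) := by
            simp only [Matrix.mul_add, Matrix.add_mul, Matrix.mul_one, Matrix.one_mul, Matrix.mul_assoc, zero_add]; abel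
    · calc Dc = 1 + Dc * (H + G * Ec * F) := hD₂
        _ = 1 + (Dc * G * Ec * F + Dc * H) := by
            simp only [Matrix.mul_add, Matrix.add_mul, Matrix.mul_one, Matrix.one_mul, Matrix.mul_assoc, zero_add]; abel
end

section
/- Let n ≥ 1 and let A be an n×n matrix over the tropical semiring Tropical (WithTop ℝ) all of whose entries are nonnegative, i.e., untrop (A i j) ≥ 0 in WithTop ℝ for all i, j. Then the matrix S := ∑_{k=0}^{n−1} A^k (sum in the matrix semiring over the tropical semiring, with A^0 = 1 the identity matrix) satisfies the closure identity S = 1 + A * S. In particular, for nonnegative edge weights the closure A× = min(I, A, A², …) equals the finite expression min(I, A, …, A^(n−1)). -/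
open Tropical

section Aux

variable {n : ℕ}

private lemma trop_sum_le {ι : Type*} (s : Finset ι) (f : ι → Tropical (WithTop ℝ))
    {k : ι} (hk : k ∈ s) : (∑ i ∈ s, f i) ≤ f k := by
  rw [← untrop_le_iff, Finset.untrop_sum']
  exact Finset.inf_le hk

private lemma trop_sum_attained {ι : Type*} (s : Finset ι) (h : s.Nonempty)
    (f : ι → Tropical (WithTop ℝ)) : ∃ k ∈ s, (∑ i ∈ s, f i) = f k := by
  obtain ⟨k, hk, hinf⟩ := Finset.exists_mem_eq_inf s h (untrop ∘ f)
  refine ⟨k, hk, untrop_injective ?_⟩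
  rw [Finset.untrop_sum']
  exact hinf

private lemma pow_le_weight (A : Matrix (Fin n) (Fin n) (Tropical (WithTop ℝ)))
    (q : ℕ → Fin n) : ∀ m, (A ^ m) (q 0) (q m) ≤ ∏ t ∈ Finset.range m, A (q t) (q (t + 1))
  | 0 => by simp [Matrix.one_apply]
  | (m + 1) => by
      rw [Finset.prod_range_succ, pow_succ]
      calc (A ^ m * A) (q 0) (q (m + 1))
          ≤ (A ^ m) (q 0) (q m) * A (q m) (q (m + 1)) := by
            rw [Matrix.mul_apply]
            exact trop_sum_le _ _ (Finset.mem_univ _)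
        _ ≤ _ := mul_le_mul_left (pow_le_weight A q m) _

private lemma exists_path (A : Matrix (Fin n) (Fin n) (Tropical (WithTop ℝ))) :
    ∀ m, 1 ≤ m → ∀ i j : Fin n, ∃ q : ℕ → Fin n, q 0 = i ∧ q m = j ∧
      (∏ t ∈ Finset.range m, A (q t) (q (t + 1))) ≤ (A ^ m) i j := by
  intro m
  induction m with
  | zero => omega
  | succ m ih =>
    intro _ i j
    rcases Nat.eq_zero_or_pos m with hm | hm
    · subst hm
      refine ⟨fun t => if t = 0 then i else j, by simp, by simp, ?_⟩
      simp [pow_one]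
    · have hne : (Finset.univ : Finset (Fin n)).Nonempty := ⟨i, Finset.mem_univ i⟩
      have hmul : (A ^ (m + 1)) i j = ∑ k : Fin n, A i k * (A ^ m) k j := by
        rw [pow_succ', Matrix.mul_apply]
      obtain ⟨k, -, hk⟩ := trop_sum_attained Finset.univ hne (fun k => A i k * (A ^ m) k j)
      obtain ⟨q, hq0, hqm, hqw⟩ := ih hm k j
      refine ⟨fun t => if t = 0 then i else q (t - 1), by simp, by simp [hqm], ?_⟩
      rw [hmul, hk, Finset.prod_range_succ']
      have e1 : ∀ t ∈ Finset.range m,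
          A (if t + 1 = 0 then i else q (t + 1 - 1))
            (if t + 1 + 1 = 0 then i else q (t + 1 + 1 - 1)) = A (q t) (q (t + 1)) := by
        intro t _; simp
      have e0 : A (if (0 : ℕ) = 0 then i else q (0 - 1))
          (if (0 : ℕ) + 1 = 0 then i else q (0 + 1 - 1)) = A i k := by simp [hq0]
      rw [Finset.prod_congr rfl e1, e0, mul_comm (A i k)]
      exact mul_le_mul_left hqw _

end Aux

/-- For a matrix `A` over the tropical semiring with nonnegative entries, the
finite sum `S = ∑_{k < n} A ^ k` (entrywise minimum of `I, A, …, A^(n-1)`)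
satisfies the closure identity `S = 1 + A * S`. -/
theorem tropical_closure_finite (n : ℕ) (hn : 1 ≤ n)
    (A : Matrix (Fin n) (Fin n) (Tropical (WithTop ℝ)))
    (hA : ∀ i j, (0 : WithTop ℝ) ≤ untrop (A i j)) :
    (∑ k ∈ Finset.range n, A ^ k) =
      1 + A * ∑ k ∈ Finset.range n, A ^ k := by
  -- Main step: S i j ≤ (A^n) i j entrywise
  have key : ∀ i j, (∑ k ∈ Finset.range n, A ^ k) i j ≤ (A ^ n) i j := by
    intro i j
    obtain ⟨q, hq0, hqn, hqw⟩ := exists_path A n hn i j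
    -- pigeonhole on q restricted to Fin (n+1)
    obtain ⟨a, b, hab, hqab⟩ := Fintype.exists_ne_map_eq_of_card_lt
      (fun t : Fin (n + 1) => q t) (by simp)
    wlog h : (a : ℕ) < (b : ℕ) generalizing a b
    · refine this b a hab.symm hqab.symm ?_
      have hne : (a : ℕ) ≠ (b : ℕ) := fun he => hab (Fin.val_injective he)
      omega
    set d := (b : ℕ) - (a : ℕ) with hd
    have hd1 : 1 ≤ d := by omega
    have hbn : (b : ℕ) ≤ n := by omega
    set m' := n - d with hm'
    have ham' : (a : ℕ) ≤ m' := by omega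
    have hm'n : m' < n := by omega
    have hmd : m' + d = n := by omega
    have hbd : (b : ℕ) = (a : ℕ) + d := by omega
    set q' : ℕ → Fin n := fun t => if t ≤ (a : ℕ) then q t else q (t + d) with hq'
    have hq'0 : q' 0 = i := by simp [hq', hq0]
    have hq'm : q' m' = j := by
      rcases lt_or_eq_of_le ham' with h1 | h1
      · have : q' m' = q (m' + d) := if_neg (by omega)
        rw [this, hmd, hqn]
      · have e : q' m' = q m' := if_pos (le_of_eq h1.symm)
        rw [e, ← h1, hqab, show (b : ℕ) = n from by omega, hqn]
    -- edge weights
    set w : ℕ → WithTop ℝ := fun t => untrop (A (q t) (q (t + 1))) with hw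
    have hwnn : ∀ t, 0 ≤ w t := fun t => hA _ _
    have hedge : ∀ t < m', untrop (A (q' t) (q' (t + 1))) =
        if t < (a : ℕ) then w t else w (t + d) := by
      intro t ht
      by_cases h1 : t < (a : ℕ)
      · rw [if_pos h1]
        simp only [hq', if_pos (le_of_lt h1), if_pos (Nat.succ_le_of_lt h1)]
        rfl
      · push_neg at h1
        rw [if_neg (not_lt.mpr h1)]
        have h2 : ¬ (t + 1 ≤ (a : ℕ)) := by omega
        rcases lt_or_eq_of_le h1 with h3 | h3
        · simp only [hq', if_neg (by omega : ¬ t ≤ (a : ℕ)), if_neg h2]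
          rw [Nat.add_right_comm t 1 d]
        · simp only [hq', if_pos (le_of_eq h3), if_neg h2]
          rw [← h3, hqab, hbd, Nat.add_right_comm (a : ℕ) 1 d, ← hbd]
          rw [hw]
          simp only [hbd, if_pos le_rfl]
    -- weight comparison
    have hwle : (∏ t ∈ Finset.range m', A (q' t) (q' (t + 1))) ≤
        ∏ t ∈ Finset.range n, A (q t) (q (t + 1)) := by
      rw [← untrop_le_iff, untrop_prod, untrop_prod]
      have lhs_eq : (∑ t ∈ Finset.range m', untrop (A (q' t) (q' (t + 1)))) =
          (∑ t ∈ Finset.Ico 0 (a : ℕ), w t) + ∑ t ∈ Finset.Ico (b : ℕ) n, w t := by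
        rw [Finset.sum_congr rfl (fun t ht => hedge t (Finset.mem_range.mp ht)),
          Finset.range_eq_Ico, ← Finset.sum_Ico_consecutive _ (Nat.zero_le (a : ℕ)) ham']
        congr 1
        · exact Finset.sum_congr rfl (fun t ht => if_pos (Finset.mem_Ico.mp ht).2)
        · rw [Finset.sum_congr rfl
            (fun t ht => if_neg (not_lt.mpr (Finset.mem_Ico.mp ht).1)),
            Finset.sum_Ico_add' w (a : ℕ) m' d, ← hbd, hmd]
      have rhs_eq : (∑ t ∈ Finset.range n, w t) =
          ((∑ t ∈ Finset.Ico 0 (a : ℕ), w t) + ∑ t ∈ Finset.Ico (a : ℕ) (b : ℕ), w t)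
            + ∑ t ∈ Finset.Ico (b : ℕ) n, w t := by
        rw [Finset.range_eq_Ico, ← Finset.sum_Ico_consecutive w (Nat.zero_le (b : ℕ)) hbn,
          ← Finset.sum_Ico_consecutive w (Nat.zero_le (a : ℕ)) (le_of_lt h)]
      rw [lhs_eq, rhs_eq]
      have hmid : (0 : WithTop ℝ) ≤ ∑ t ∈ Finset.Ico (a : ℕ) (b : ℕ), w t :=
        Finset.sum_nonneg (fun t _ => hwnn t)
      exact add_le_add_left (le_add_of_nonneg_right hmid) _
    calc (∑ k ∈ Finset.range n, A ^ k) i j ≤ (A ^ m') i j := by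
          have := trop_sum_le (Finset.range n) (fun k => (A ^ k) i j)
            (Finset.mem_range.mpr hm'n)
          simpa [Matrix.sum_apply] using this
      _ = (A ^ m') (q' 0) (q' m') := by rw [hq'0, hq'm]
      _ ≤ ∏ t ∈ Finset.range m', A (q' t) (q' (t + 1)) := pow_le_weight A q' m'
      _ ≤ ∏ t ∈ Finset.range n, A (q t) (q (t + 1)) := hwle
      _ ≤ (A ^ n) i j := hqw
  -- assemble
  have expand : (1 : Matrix (Fin n) (Fin n) (Tropical (WithTop ℝ)))
      + A * ∑ k ∈ Finset.range n, A ^ k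
      = (∑ k ∈ Finset.range n, A ^ k) + A ^ n := by
    rw [Finset.mul_sum]
    have h1 : ∀ k, A * A ^ k = A ^ (k + 1) := fun k => (pow_succ' A k).symm
    rw [Finset.sum_congr rfl (fun k _ => h1 k), add_comm,
      show (1 : Matrix (Fin n) (Fin n) (Tropical (WithTop ℝ))) = A ^ 0 from (pow_zero A).symm,
      ← Finset.sum_range_succ' (fun k => A ^ k) n, Finset.sum_range_succ]
  rw [expand]
  ext i j
  rw [Matrix.add_apply]
  exact (Tropical.add_eq_left (key i j)).symm
end

section
/- Let n ≥ 1 and let A be an n×n matrix over the tropical semiring Tropical (WithTop ℝ) all of whose entries are nonnegative, i.e., untrop (A i j) ≥ 0 in WithTop ℝ for all i, j. Then for all indices i, j, the value untrop((∑_{k=0}^{n−1} A^k) i j) equals the infimum, taken in WithTop ℝ over all natural numbers m and all functions p : Fin (m+1) → Fin n with p 0 = i and p m = j, of the total weight ∑_{t=0}^{m−1} untrop(A (p t) (p (t+1))). That is, the entries of the closure min(I, A, …, A^(n−1)) are exactly the shortest-path distances in the weighted graph with weight matrix A. -/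
open Tropical

lemma my_le_iInf {ι : Sort*} {f : ι → WithTop ℝ} {c : WithTop ℝ} (h : ∀ i, c ≤ f i) :
    c ≤ ⨅ i, f i := by
  rcases isEmpty_or_nonempty ι with h' | h'
  · rw [iInf, Set.range_eq_empty, WithTop.sInf_empty]; exact le_top
  · exact le_ciInf h

lemma my_iInf_le {ι : Sort*} {f : ι → WithTop ℝ} (h : ∀ i, 0 ≤ f i) (i : ι) :
    (⨅ i, f i) ≤ f i :=
  ciInf_le ⟨0, by rintro x ⟨i, rfl⟩; exact h i⟩ i

def extWalk {n m : ℕ} (i : Fin n) {j k : Fin n}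
    (p : {p : Fin (m + 1) → Fin n // p 0 = k ∧ p (Fin.last m) = j}) :
    {p : Fin (m + 2) → Fin n // p 0 = i ∧ p (Fin.last (m + 1)) = j} :=
  ⟨Fin.cons i p.1, Fin.cons_zero _ _, by
    rw [← Fin.succ_last, Fin.cons_succ]; exact p.2.2⟩

def tailWalk {n m : ℕ} {i j : Fin n}
    (q : {p : Fin (m + 2) → Fin n // p 0 = i ∧ p (Fin.last (m + 1)) = j})
    (k : Fin n) (hk : q.1 1 = k) :
    {p : Fin (m + 1) → Fin n // p 0 = k ∧ p (Fin.last m) = j} :=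
  ⟨fun t => q.1 t.succ, by
    show q.1 (Fin.succ 0) = k
    rw [Fin.succ_zero_eq_one]; exact hk, by
    show q.1 (Fin.last m).succ = j
    rw [Fin.succ_last]; exact q.2.2⟩

theorem tropical_pow_eq {n : ℕ} (A : Matrix (Fin n) (Fin n) (Tropical (WithTop ℝ)))
    (m : ℕ) (i j : Fin n) :
    (A ^ m) i j = ∑ p : {p : Fin (m + 1) → Fin n // p 0 = i ∧ p (Fin.last m) = j},
      ∏ t : Fin m, A (p.1 t.castSucc) (p.1 t.succ) := by
  induction m generalizing i with
  | zero =>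
    rcases eq_or_ne i j with rfl | h
    · haveI : Unique {p : Fin 1 → Fin n // p 0 = i ∧ p (Fin.last 0) = i} :=
        { default := ⟨fun _ => i, rfl, rfl⟩
          uniq := fun q => Subtype.ext (funext fun t => by
            rw [Subsingleton.elim t 0]; exact q.2.1) }
      rw [pow_zero, Matrix.one_apply_eq, Fintype.sum_unique]
      simp
    · haveI : IsEmpty {p : Fin 1 → Fin n // p 0 = i ∧ p (Fin.last 0) = j} := by
        constructor
        rintro ⟨p, h1, h2⟩
        exact h (h1 ▸ h2 ▸ rfl)
      rw [pow_zero, Matrix.one_apply_ne h, Fintype.sum_empty]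
  | succ m ih =>
    rw [pow_succ', Matrix.mul_apply]
    simp_rw [ih, Finset.mul_sum]
    rw [← Finset.sum_fiberwise Finset.univ
      (fun q : {p : Fin (m + 2) → Fin n // p 0 = i ∧ p (Fin.last (m + 1)) = j} => q.1 1)
      (fun q => ∏ t : Fin (m + 1), A (q.1 t.castSucc) (q.1 t.succ))]
    refine Finset.sum_congr rfl fun k _ => ?_
    refine Finset.sum_bij' (fun p _ => extWalk i p)
      (fun q hq => tailWalk q k (Finset.mem_filter.mp hq).2) ?_ ?_ ?_ ?_ ?_
    · intro p _
      simp only [Finset.mem_filter, Finset.mem_univ, true_and, extWalk]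
      rw [← Fin.succ_zero_eq_one, Fin.cons_succ]; exact p.2.1
    · intro q hq; exact Finset.mem_univ _
    · intro p _
      apply Subtype.ext; funext t
      simp [tailWalk, extWalk, Fin.cons_succ]
    · intro q hq
      apply Subtype.ext; funext t
      refine Fin.cases ?_ (fun s => ?_) t
      · simp only [extWalk, tailWalk, Fin.cons_zero]
        exact q.2.1.symm
      · simp only [extWalk, tailWalk, Fin.cons_succ]
    · intro p _
      rw [Fin.prod_univ_succ]
      congr 1
      beta_reduce
      simp [extWalk, p.2.1]

noncomputable def nwt {n : ℕ} (A : Matrix (Fin n) (Fin n) (Tropical (WithTop ℝ)))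
    (p : ℕ → Fin n) (m : ℕ) : WithTop ℝ :=
  ∑ t ∈ Finset.range m, untrop (A (p t) (p (t + 1)))

lemma nwt_nonneg {n : ℕ} {A : Matrix (Fin n) (Fin n) (Tropical (WithTop ℝ))}
    (hA : ∀ i j, (0 : WithTop ℝ) ≤ untrop (A i j)) (p : ℕ → Fin n) (m : ℕ) :
    0 ≤ nwt A p m :=
  Finset.sum_nonneg fun t _ => hA _ _

lemma reduce_walk {n : ℕ} (hn : 1 ≤ n) (A : Matrix (Fin n) (Fin n) (Tropical (WithTop ℝ)))
    (hA : ∀ i j, (0 : WithTop ℝ) ≤ untrop (A i j)) :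
    ∀ (m : ℕ) (p : ℕ → Fin n), ∃ k, k < n ∧ ∃ q : ℕ → Fin n,
      q 0 = p 0 ∧ q k = p m ∧ nwt A q k ≤ nwt A p m := by
  intro m
  induction m using Nat.strong_induction_on with
  | _ m IH =>
  intro p
  by_cases hm : m < n
  · exact ⟨m, hm, p, rfl, rfl, le_rfl⟩
  push_neg at hm
  obtain ⟨a₀, b₀, hab₀, heq₀⟩ := Fintype.exists_ne_map_eq_of_card_lt
    (fun t : Fin (m + 1) => p t.1) (by simpa using Nat.lt_succ_of_le hm)
  have hex : ∃ a b : ℕ, a < b ∧ b ≤ m ∧ p a = p b := by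
    rcases lt_or_gt_of_ne hab₀ with h | h
    · exact ⟨a₀.1, b₀.1, h, Nat.lt_succ_iff.mp b₀.2, heq₀⟩
    · exact ⟨b₀.1, a₀.1, h, Nat.lt_succ_iff.mp a₀.2, heq₀.symm⟩
  obtain ⟨a, b, hab, hbm, hpab⟩ := hex
  set d := b - a with hd
  have hd0 : 0 < d := by omega
  have hdm : d ≤ m := by omega
  set m' := m - d with hm'd
  set q : ℕ → Fin n := fun t => if t < a then p t else p (t + d) with hqdef
  have hq0 : q 0 = p 0 := by
    by_cases h : 0 < a
    · simp [hqdef, h]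
    · have ha0 : a = 0 := by omega
      have h1 : q 0 = p (0 + d) := if_neg (by omega)
      have h2 : 0 + d = b := by omega
      rw [h1, h2, ← hpab, ha0]
  have hqm : q m' = p m := by
    have h1 : ¬ m' < a := by omega
    have h2 : q m' = p (m' + d) := if_neg h1
    have h3 : m' + d = m := by omega
    rw [h2, h3]
  have hstep : ∀ t, untrop (A (q t) (q (t + 1))) =
      if t < a then untrop (A (p t) (p (t + 1)))
      else untrop (A (p (t + d)) (p (t + d + 1))) := by
    intro t
    by_cases h : t < a
    · rw [if_pos h]
      have h1 : q t = p t := if_pos h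
      have h2 : q (t + 1) = p (t + 1) := by
        by_cases h2 : t + 1 < a
        · exact if_pos h2
        · have h3 : t + 1 = a := by omega
          have h4 : q (t + 1) = p (t + 1 + d) := if_neg (by omega)
          have h5 : t + 1 + d = b := by omega
          rw [h4, h5, ← hpab, ← h3]
      rw [h1, h2]
    · rw [if_neg h]
      have h1 : q t = p (t + d) := if_neg h
      have h2 : q (t + 1) = p (t + 1 + d) := if_neg (by omega)
      have h3 : t + 1 + d = t + d + 1 := by omega
      rw [h1, h2, h3]
  have ham' : a ≤ m' := by omega
  have hle : nwt A q m' ≤ nwt A p m := by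
    have e1 : nwt A q m' =
        (∑ t ∈ Finset.Ico 0 a, untrop (A (p t) (p (t + 1)))) +
          ∑ t ∈ Finset.Ico b m, untrop (A (p t) (p (t + 1))) := by
      rw [nwt, Finset.range_eq_Ico,
        ← Finset.sum_Ico_consecutive _ (Nat.zero_le a) ham']
      congr 1
      · refine Finset.sum_congr rfl fun t ht => ?_
        rw [hstep t, if_pos (Finset.mem_Ico.mp ht).2]
      · have hbad : b = a + d := by omega
        have hmmd : m = m' + d := by omega
        rw [hbad, hmmd, ← Finset.sum_Ico_add' (fun t => untrop (A (p t) (p (t + 1)))) a m' d]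
        refine Finset.sum_congr rfl fun t ht => ?_
        rw [hstep t, if_neg (by have := (Finset.mem_Ico.mp ht).1; omega)]
    have e2 : nwt A p m =
        ((∑ t ∈ Finset.Ico 0 a, untrop (A (p t) (p (t + 1)))) +
          ∑ t ∈ Finset.Ico a b, untrop (A (p t) (p (t + 1)))) +
          ∑ t ∈ Finset.Ico b m, untrop (A (p t) (p (t + 1))) := by
      rw [nwt, Finset.range_eq_Ico,
        ← Finset.sum_Ico_consecutive _ (Nat.zero_le b) (by omega : b ≤ m),
        ← Finset.sum_Ico_consecutive _ (Nat.zero_le a) (le_of_lt hab)]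
    rw [e1, e2, add_assoc]
    refine add_le_add (le_refl _) ?_
    exact le_add_of_nonneg_left (Finset.sum_nonneg fun t _ => hA _ _)
  have hm'lt : m' < m := by omega
  obtain ⟨k, hk, r, hr0, hrk, hrle⟩ := IH m' hm'lt q
  exact ⟨k, hk, r, hr0.trans hq0, by rw [hrk, hqm], hrle.trans hle⟩


/-- For a matrix `A` over the tropical semiring with nonnegative entries, the
entries of the closure `∑_{k < n} A ^ k` (the entrywise minimum of
`I, A, …, A^(n-1)`) are exactly the shortest-path distances: the infimum in
`WithTop ℝ`, over all natural numbers `m` and all walks `p` of length `m`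
from `i` to `j`, of the total weight of the walk. -/
theorem tropical_closure_shortest_path (n : ℕ) (hn : 1 ≤ n)
    (A : Matrix (Fin n) (Fin n) (Tropical (WithTop ℝ)))
    (hA : ∀ i j, (0 : WithTop ℝ) ≤ untrop (A i j)) :
    ∀ i j, untrop ((∑ k ∈ Finset.range n, A ^ k) i j) =
      ⨅ (m : ℕ)
        (p : {p : Fin (m + 1) → Fin n // p 0 = i ∧ p (Fin.last m) = j}),
        ∑ t : Fin m, untrop (A (p.1 t.castSucc) (p.1 t.succ)) := by
  intro i j
  have hwt : ∀ (m : ℕ) (p : {p : Fin (m + 1) → Fin n // p 0 = i ∧ p (Fin.last m) = j}),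
      (0 : WithTop ℝ) ≤ ∑ t : Fin m, untrop (A (p.1 t.castSucc) (p.1 t.succ)) :=
    fun m p => Finset.sum_nonneg fun t _ => hA _ _
  rw [Matrix.sum_apply, Finset.untrop_sum]
  simp_rw [tropical_pow_eq, _root_.untrop_sum, untrop_prod]
  apply le_antisymm
  · refine my_le_iInf fun m => my_le_iInf fun p => ?_
    -- extend p to an ℕ-indexed walk
    set P : ℕ → Fin n := fun t => p.1 ⟨min t m, Nat.lt_succ_of_le (min_le_right _ _)⟩ with hP
    have hP0 : P 0 = i := by
      have : (⟨min 0 m, Nat.lt_succ_of_le (min_le_right _ _)⟩ : Fin (m + 1)) = 0 := by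
        apply Fin.ext; simp
      rw [hP]; simp only []; rw [this]; exact p.2.1
    have hPm : P m = j := by
      have : (⟨min m m, Nat.lt_succ_of_le (min_le_right _ _)⟩ : Fin (m + 1)) = Fin.last m := by
        apply Fin.ext; simp
      rw [hP]; simp only []; rw [this]; exact p.2.2
    have hPw : ∑ t : Fin m, untrop (A (p.1 t.castSucc) (p.1 t.succ)) = nwt A P m := by
      rw [nwt, ← Fin.sum_univ_eq_sum_range]
      refine Finset.sum_congr rfl fun t _ => ?_
      have e1 : (⟨min t.1 m, Nat.lt_succ_of_le (min_le_right _ _)⟩ : Fin (m + 1))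
          = t.castSucc := by
        apply Fin.ext; simp [Nat.min_eq_left (le_of_lt t.2)]
      have e2 : (⟨min (t.1 + 1) m, Nat.lt_succ_of_le (min_le_right _ _)⟩ : Fin (m + 1))
          = t.succ := by
        apply Fin.ext; simp [Nat.min_eq_left t.2]
      have h1 : P t.1 = p.1 t.castSucc := by rw [hP]; simp only []; rw [e1]
      have h2 : P (t.1 + 1) = p.1 t.succ := by rw [hP]; simp only []; rw [e2]
      rw [h1, h2]
    obtain ⟨k, hk, q, hq0, hqk, hqle⟩ := reduce_walk hn A hA m P
    set Q : Fin (k + 1) → Fin n := fun t => q t.1 with hQ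
    have hQ0 : Q 0 = i := by rw [hQ]; simp only []; rw [Fin.val_zero, hq0, hP0]
    have hQl : Q (Fin.last k) = j := by
      rw [hQ]; simp only []; rw [Fin.val_last, hqk, hPm]
    have hQw : ∑ t : Fin k, untrop (A (Q t.castSucc) (Q t.succ)) = nwt A q k := by
      rw [nwt, ← Fin.sum_univ_eq_sum_range]
      rfl
    have inner0 : ∀ kk : {x // x ∈ Finset.range n}, (0 : WithTop ℝ) ≤
        ⨅ p : {p : Fin ((kk : ℕ) + 1) → Fin n // p 0 = i ∧ p (Fin.last kk) = j},
          ∑ t : Fin kk, untrop (A (p.1 t.castSucc) (p.1 t.succ)) :=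
      fun kk => my_le_iInf fun p' => hwt _ p'
    refine le_trans (my_iInf_le inner0 ⟨k, Finset.mem_range.mpr hk⟩) ?_
    refine le_trans (my_iInf_le (fun p' => hwt k p') ⟨Q, hQ0, hQl⟩) ?_
    rw [hQw, hPw]
    exact hqle
  · refine my_le_iInf fun k => my_le_iInf fun p => ?_
    have outer0 : ∀ m : ℕ, (0 : WithTop ℝ) ≤
        ⨅ p : {p : Fin (m + 1) → Fin n // p 0 = i ∧ p (Fin.last m) = j},
          ∑ t : Fin m, untrop (A (p.1 t.castSucc) (p.1 t.succ)) :=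
      fun m => my_le_iInf fun p' => hwt m p'
    exact le_trans (my_iInf_le outer0 (k : ℕ)) (my_iInf_le (fun p' => hwt _ p') p)
end
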